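/- arXiv:1812.03767 — 2 statements merged into one kernel-verified Lean document; each statement's English description precedes it below -/
import Mathlib

section
/- Fix integers n ≥ 2 and l ≥ 0. For all α, γ ∈ B^{(n)}_l, the identity K^{(n,l)}(z)^γ_α = z^{α₁−γ₁} K^{(n,l)}(z)^{σ(γ)}_{σ(α)} holds in F((t)), where σ(α) = (α₂, …, α_n, α₁) denotes the cyclic shift (note z^{α₁−γ₁} = t^{γ₁−α₁}). -/
/-!
Each `G^j_i` maps `|m⟩` into `F·|m + j - i⟩`. Since `|α| = |γ|`, the factors `X = G^{γ₁}_{α₁}` and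
`Y = G^{γ₂}_{α₂} ⋯ G^{γₙ}_{αₙ}` therefore have opposite degrees `±d`, `d = γ₁ - α₁`, and for such
operators the diagonal is cyclic up to a shift: `(XY)_{mm} = (YX)_{m-d,m-d}`, both sides vanishing
when an index would be negative. Reindexing `Σ_m q^{-lm} t^m (XY)_{mm}` thus produces the factor
`t^d q^{-ld}`, and the power of `q` is absorbed by `⟨γ,α⟩ - ⟨σ(γ),σ(α)⟩ = l d`.
-/

open scoped Classical

noncomputable section

namespace KOY

/-- `F = ℚ(q)`, the field of rational functions in an indeterminate `q` over `ℚ`. -/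
abbrev Fq : Type := RatFunc ℚ

/-- The indeterminate `q`. -/
def q : Fq := RatFunc.X

/-- `[u] = (q^u - q^{-u})/(q - q⁻¹)`. -/
def qint (u : ℤ) : Fq := (q ^ u - q ^ (-u)) / (q - q⁻¹)

/-- `(z; a)_m = ∏_{k=0}^{m-1} (1 - z a^k)`. -/
def poch {R : Type*} [CommRing R] (z a : R) (m : ℕ) : R :=
  ∏ k ∈ Finset.range m, (1 - z * a ^ k)

/-- The `q`-boson Fock space `⊕_{m ≥ 0} F·|m⟩`. -/
abbrev Fock : Type := ℕ →₀ Fq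

/-- creation operator `a⁺ |m⟩ = |m+1⟩`. -/
def aP : Module.End Fq Fock := Finsupp.lift Fock Fq ℕ fun m => Finsupp.single (m + 1) 1

/-- annihilation operator `a⁻ |m⟩ = (1-q^m)|m-1⟩`. -/
def aM : Module.End Fq Fock :=
  Finsupp.lift Fock Fq ℕ fun m => (1 - q ^ m) • Finsupp.single (m - 1) 1

/-- `k |m⟩ = q^m |m⟩`. -/
def kO : Module.End Fq Fock := Finsupp.lift Fock Fq ℕ fun m => q ^ m • Finsupp.single m 1

/-- The operator `G^j_i` for `i, j ≥ 0` (`i` = lower index, `j` = upper index):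
`G^j_i = (-q;q)_{i+j} Σ_{m=0}^{t} ((q^{-t};q)_m (-q^{-t};q)_m / ((q;q)_m (-q^{-s};q)_m))
  (a⁺)^{(j-i)_+} (q^m k^m) (a⁻)^{(i-j)_+}` with `s = i+j`, `t = min i j`. -/
def GopN (i j : ℕ) : Module.End Fq Fock :=
  poch (-q) q (i + j) •
    ∑ m ∈ Finset.range (min i j + 1),
      (poch (q ^ (-(min i j : ℤ))) q m * poch (-q ^ (-(min i j : ℤ))) q m /
          (poch q q m * poch (-q ^ (-((i : ℤ) + j))) q m)) •
        (aP ^ (j - i) * (q ^ m • kO ^ m) * aM ^ (i - j))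

/-- `G^j_i` with the convention that it vanishes for negative indices. -/
def Gop (i j : ℤ) : Module.End Fq Fock :=
  if 0 ≤ i ∧ 0 ≤ j then GopN i.toNat j.toNat else 0

/-- `X_{mm}`: the coefficient of `|m⟩` in `X |m⟩`. -/
def elem (X : Module.End Fq Fock) (m : ℕ) : Fq := X (Finsupp.single m 1) m

/-- `⟨a, b⟩ = ∑_{i<j} a_i b_j` (natural numbers). -/
def innN {n : ℕ} (a b : Fin n → ℕ) : ℕ := ∑ i, ∑ j, if i < j then a i * b j else 0

/-- `⟨a, b⟩ = ∑_{i<j} a_i b_j` (integers). -/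
def innZ {n : ℕ} (a b : Fin n → ℤ) : ℤ := ∑ i, ∑ j, if i < j then a i * b j else 0

/-- `|a| = ∑ a_i`. -/
def asum {k : ℕ} (a : Fin k → ℤ) : ℤ := ∑ i, a i

/-- coercion of arrays to integer arrays. -/
def castZ {n : ℕ} (a : Fin n → ℕ) : Fin n → ℤ := fun i => (a i : ℤ)

/-- The matrix product formula for `K^{(n,l)}(z)^γ_α` as a power series in `t = z⁻¹`:
`q^{⟨γ,α⟩} (q^{-l}t;q)_{l+1} ((q²;q²)_l (-qt;q)_l)⁻¹ Σ_{m≥0} q^{-lm} t^m (G^{γ₁}_{α₁}⋯G^{γₙ}_{αₙ})_{mm}`,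
with coefficients transported along a ring hom `f` from `ℚ(q)`. -/
def KmatPS {K : Type*} [Field K] (f : Fq →+* K) (n l : ℕ) (α γ : Fin n → ℕ) :
    PowerSeries K :=
  PowerSeries.C (R := K) (f (q ^ innN γ α)) *
    poch (PowerSeries.C (R := K) (f (q ^ (-(l : ℤ)))) * PowerSeries.X) (PowerSeries.C (R := K) (f q)) (l + 1) *
    (PowerSeries.C (R := K) (f (poch (q ^ 2) (q ^ 2) l)) *
        poch (PowerSeries.C (R := K) (f (-q)) * PowerSeries.X) (PowerSeries.C (R := K) (f q)) l)⁻¹ *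
    PowerSeries.mk fun m =>
      f (q ^ (-(l * m : ℤ)) * elem (List.ofFn fun i => Gop (α i) (γ i)).prod m)

/-- `F((t))`, the field of formal Laurent series in `t`. -/
abbrev LS : Type := LaurentSeries Fq

/-- `K^{(n,l)}(z)^γ_α ∈ F((t))` (first array = lower index `α`, second = upper index `γ`). -/
def Kmat (n l : ℕ) (α γ : Fin n → ℕ) : LS :=
  HahnSeries.ofPowerSeries ℤ Fq (KmatPS (RingHom.id Fq) n l α γ)

/-- Extension of `Kmat` to integer arrays, vanishing if some entry is negative. -/
def KmatZ (n l : ℕ) (α γ : Fin n → ℤ) : LS :=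
  if (∀ i, 0 ≤ α i) ∧ ∀ i, 0 ≤ γ i then
    Kmat n l (fun i => (α i).toNat) fun i => (γ i).toNat
  else 0

/-- `t ∈ F((t))`. -/
def T : LS := HahnSeries.single (1 : ℤ) (1 : Fq)

/-- the constant embedding `F → F((t))`. -/
def CL : Fq →+* LS := HahnSeries.C

/-- `Φ̄_q(γ|β; λ, μ)` for integer arrays, vanishing unless `0 ≤ γ ≤ β`. -/
def phiBarP {K : Type*} [Field K] (qv lam mu : K) {k : ℕ} (γ β : Fin k → ℤ) : K :=
  if ∀ i, 0 ≤ γ i ∧ γ i ≤ β i then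
    poch lam qv (asum γ).toNat * poch (mu / lam) qv (asum β - asum γ).toNat /
        poch mu qv (asum β).toNat *
      ∏ i, poch qv qv (β i).toNat / (poch qv qv (β i - γ i).toNat * poch qv qv (γ i).toNat)
  else 0

/-- `Φ_q(γ|β; λ, μ) = q^{⟨β-γ,γ⟩} (μ/λ)^{|γ|} Φ̄_q(γ|β; λ, μ)`. -/
def phiP {K : Type*} [Field K] (qv lam mu : K) {k : ℕ} (γ β : Fin k → ℤ) : K :=
  qv ^ innZ (β - γ) γ * (mu / lam) ^ asum γ * phiBarP qv lam mu γ β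

/-- truncation `ᾱ = (α₁, …, α_{n-1})` (as an integer array). -/
def bar {n : ℕ} (a : Fin n → ℕ) : Fin (n - 1) → ℤ :=
  fun i => (a ⟨i.val, by have := i.isLt; omega⟩ : ℤ)

/-- `A^{(l,m)}(z)^{γ,δ}_{α,β}
  = q^{⟨α,β⟩-⟨δ,γ⟩} Σ_{ξ̄+η̄=γ̄+δ̄} Φ_{q²}(ξ̄-δ̄|ξ̄; q^{m-l}z, q^{-l-m}z) Φ_{q²}(η̄|β̄; q^{-l-m}z⁻¹, q^{-2m})`
in any field, for chosen values of `q` and `z`. -/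
def Amat {K : Type*} [Field K] (qv zv : K) {n : ℕ} (l m : ℕ) (γ δ α β : Fin n → ℕ) : K :=
  qv ^ ((innN α β : ℤ) - (innN δ γ : ℤ)) *
    ∑ ξ ∈ Finset.Icc (0 : Fin (n - 1) → ℤ) (bar γ + bar δ),
      phiP (qv ^ 2) (qv ^ ((m : ℤ) - l) * zv) (qv ^ (-(l : ℤ) - m) * zv) (ξ - bar δ) ξ *
        phiP (qv ^ 2) (qv ^ (-(l : ℤ) - m) * zv⁻¹) (qv ^ (-(2 * m : ℤ))) (bar γ + bar δ - ξ)
          (bar β)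

/-- `𝒮(λ,μ)^{γ,δ}_{α,β} = θ(γ+δ=α+β) q^{⟨β-γ,γ⟩+⟨α,β-γ⟩+|α||β|-|γ||δ|} λ^{2(|δ|-|α|)}
  Φ̄_{q²}(α|δ; λ², μ²)`, the parametric `R` matrix element. -/
def Smat {K : Type*} [Field K] (qv lam mu : K) {k : ℕ} (γ δ α β : Fin k → ℕ) : K :=
  if γ + δ = α + β then
    qv ^ (innZ (castZ β - castZ γ) (castZ γ) + innZ (castZ α) (castZ β - castZ γ) +
          (asum (castZ α) * asum (castZ β) - asum (castZ γ) * asum (castZ δ))) *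
      lam ^ (2 * (asum (castZ δ) - asum (castZ α))) *
      phiBarP (qv ^ 2) (lam ^ 2) (mu ^ 2) (castZ α) (castZ δ)
  else 0

/-- reversal `ρ(a) = (a_n, …, a_1)`. -/
def rev {n : ℕ} {M : Type*} (a : Fin n → M) : Fin n → M := fun i => a i.rev

/-- cyclic shift `σ(a) = (a_2, …, a_n, a_1)`. -/
def cyc {n : ℕ} {M : Type*} (a : Fin n → M) : Fin n → M :=
  fun i => a ⟨(i.val + 1) % n, Nat.mod_lt _ (by have := i.isLt; omega)⟩

/-- the cyclic successor on `Fin n`. -/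
def nxt {n : ℕ} (i : Fin n) : Fin n :=
  ⟨(i.val + 1) % n, Nat.mod_lt _ (by have := i.isLt; omega)⟩

/-- deletion of the `i`-th entry of an array. -/
def del {n : ℕ} (i : Fin n) (a : Fin n → ℕ) : Fin (n - 1) → ℕ :=
  fun j =>
    if (j : ℕ) < (i : ℕ) then a ⟨j, by have := j.isLt; omega⟩
    else a ⟨(j : ℕ) + 1, by have := j.isLt; omega⟩

/-- the `q²`-binomial coefficient `binom(b, c)_{q²}` as an element of `ℚ(q)`. -/
def qbinom2 (b c : ℕ) : Fq :=
  poch (q ^ 2) (q ^ 2) b / (poch (q ^ 2) (q ^ 2) (b - c) * poch (q ^ 2) (q ^ 2) c)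

/-- `ℚ(q)(z) = ℚ(q, z)`. -/
abbrev Fqz : Type := RatFunc Fq

/-- the image of `q` in `ℚ(q, z)`. -/
def qz : Fqz := RatFunc.C q

/-- the indeterminate `z` in `ℚ(q, z)`. -/
def zz : Fqz := RatFunc.X

lemma q_ne_zero : q ≠ 0 := RatFunc.X_ne_zero

lemma aP_single (m : ℕ) : aP (Finsupp.single m 1) = Finsupp.single (m + 1) 1 := by
  simp [aP]

lemma aM_single (m : ℕ) : aM (Finsupp.single m 1) = (1 - q ^ m) • Finsupp.single (m - 1) 1 := by
  simp [aM]

lemma kO_single (m : ℕ) : kO (Finsupp.single m 1) = q ^ m • Finsupp.single m 1 := by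
  simp only [kO, Finsupp.lift_apply]
  rw [Finsupp.sum_single_index (by simp), one_smul]

/-- Operators of degree `d`, i.e. `X |m⟩ ∈ F·|m + d⟩`; in particular `X |m⟩ = 0` if `m + d < 0`. -/
def shiftOps (d : ℤ) : Submodule Fq (Module.End Fq Fock) where
  carrier := {X | ∀ m k : ℕ, (k : ℤ) ≠ m + d → X (Finsupp.single m 1) k = 0}
  add_mem' hX hY m k hk := by simp [hX m k hk, hY m k hk]
  zero_mem' := by simp
  smul_mem' c X hX m k hk := by simp [hX m k hk]

section shiftOps

variable {X Y : Module.End Fq Fock} {d e : ℤ}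

lemma apply_single_of_mem_shiftOps (hX : X ∈ shiftOps d) {m k : ℕ} (hk : (m : ℤ) + d = k) :
    X (Finsupp.single m 1) = Finsupp.single k (X (Finsupp.single m 1) k) := by
  ext k'
  by_cases hk' : k' = k
  · subst hk'; simp
  · rw [Finsupp.single_eq_of_ne hk']
    exact hX m k' (by omega)

lemma apply_single_eq_zero_of_mem_shiftOps (hX : X ∈ shiftOps d) {m : ℕ} (hm : (m : ℤ) + d < 0) :
    X (Finsupp.single m 1) = 0 := by
  ext k
  exact hX m k (by omega)

lemma mul_mem_shiftOps (hX : X ∈ shiftOps d) (hY : Y ∈ shiftOps e) : X * Y ∈ shiftOps (d + e) := by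
  intro m k hk
  rw [Module.End.mul_apply]
  by_cases hm : 0 ≤ (m : ℤ) + e
  · rw [apply_single_of_mem_shiftOps hY (k := (m + e).toNat) (by omega),
      ← Finsupp.smul_single_one, map_smul, Finsupp.smul_apply, hX _ k (by omega), smul_zero]
  · rw [apply_single_eq_zero_of_mem_shiftOps hY (by omega), map_zero, Finsupp.zero_apply]

lemma one_mem_shiftOps : (1 : Module.End Fq Fock) ∈ shiftOps 0 := by
  intro m k hk
  rw [Module.End.one_apply, Finsupp.single_eq_of_ne (by omega)]

lemma pow_mem_shiftOps (hX : X ∈ shiftOps d) (k : ℕ) : X ^ k ∈ shiftOps (k * d) := by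
  induction k with
  | zero => simpa using one_mem_shiftOps
  | succ k ih =>
    rw [pow_succ, show ((k + 1 : ℕ) : ℤ) * d = k * d + d by push_cast; ring]
    exact mul_mem_shiftOps ih hX

lemma list_prod_ofFn_mem_shiftOps {n : ℕ} {f : Fin n → Module.End Fq Fock} {d : Fin n → ℤ}
    (hf : ∀ i, f i ∈ shiftOps (d i)) : (List.ofFn f).prod ∈ shiftOps (∑ i, d i) := by
  induction n with
  | zero => simpa using one_mem_shiftOps
  | succ n ih =>
    rw [List.ofFn_succ, List.prod_cons, Fin.sum_univ_succ]
    exact mul_mem_shiftOps (hf 0) (ih fun i => hf i.succ)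

lemma elem_mul_comm_of_mem_shiftOps (hX : X ∈ shiftOps d) (hY : Y ∈ shiftOps (-d)) {m m' : ℕ}
    (h : (m' : ℤ) + d = m) : elem (X * Y) m = elem (Y * X) m' := by
  have hy := apply_single_of_mem_shiftOps hY (m := m) (k := m') (by omega)
  have hx := apply_single_of_mem_shiftOps hX h
  simp only [elem, Module.End.mul_apply]
  rw [hy, ← Finsupp.smul_single_one, map_smul, hx, ← Finsupp.smul_single_one _ (X _ m), map_smul,
    hy]
  simp [mul_comm]

lemma elem_mul_eq_zero_of_mem_shiftOps (hY : Y ∈ shiftOps e) {m : ℕ} (hm : (m : ℤ) + e < 0) :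
    elem (X * Y) m = 0 := by
  simp [elem, apply_single_eq_zero_of_mem_shiftOps hY hm]

end shiftOps

lemma aP_mem_shiftOps : aP ∈ shiftOps 1 := by
  intro m k hk
  rw [aP_single, Finsupp.single_eq_of_ne (by omega)]

lemma aM_mem_shiftOps : aM ∈ shiftOps (-1) := by
  intro m k hk
  rw [aM_single, Finsupp.smul_apply]
  rcases m with _ | m
  · simp
  · rw [Finsupp.single_eq_of_ne (by omega), smul_zero]

lemma kO_mem_shiftOps : kO ∈ shiftOps 0 := by
  intro m k hk
  rw [kO_single, Finsupp.smul_apply, Finsupp.single_eq_of_ne (by omega), smul_zero]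

lemma GopN_mem_shiftOps (i j : ℕ) : GopN i j ∈ shiftOps (j - i) := by
  have hdeg : ((j - i : ℕ) : ℤ) * 1 + (0 : ℤ) + ((i - j : ℕ) : ℤ) * -1 = j - i := by omega
  rw [GopN, ← hdeg]
  refine Submodule.smul_mem _ _ (Submodule.sum_mem _ fun m _ => Submodule.smul_mem _ _ ?_)
  refine mul_mem_shiftOps (mul_mem_shiftOps (pow_mem_shiftOps aP_mem_shiftOps _) ?_)
    (pow_mem_shiftOps aM_mem_shiftOps _)
  simpa using Submodule.smul_mem _ _ (pow_mem_shiftOps kO_mem_shiftOps m)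

lemma Gop_natCast_mem_shiftOps (i j : ℕ) : Gop i j ∈ shiftOps (j - i) := by
  simpa [Gop] using GopN_mem_shiftOps i j

lemma list_prod_ofFn_Gop_mem_shiftOps {n : ℕ} (α γ : Fin n → ℕ) :
    (List.ofFn fun i => Gop (α i) (γ i)).prod ∈ shiftOps ((∑ i, γ i : ℕ) - (∑ i, α i : ℕ)) := by
  simpa [Finset.sum_sub_distrib] using
    list_prod_ofFn_mem_shiftOps fun i => Gop_natCast_mem_shiftOps (α i) (γ i)

def diagSeries (l : ℕ) (X : Module.End Fq Fock) : LS :=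
  HahnSeries.ofPowerSeries ℤ Fq (PowerSeries.mk fun m => q ^ (-(l * m : ℤ)) * elem X m)

lemma diagSeries_mul_comm {X Y : Module.End Fq Fock} {d : ℤ} (hX : X ∈ shiftOps d)
    (hY : Y ∈ shiftOps (-d)) (l : ℕ) :
    diagSeries l (X * Y) = HahnSeries.single d (q ^ (-(l * d))) * diagSeries l (Y * X) := by
  ext k
  rw [show k = (k - d) + d by ring, HahnSeries.coeff_single_mul_add, diagSeries, diagSeries,
    PowerSeries.coeff_coe, PowerSeries.coeff_coe, PowerSeries.coeff_mk, PowerSeries.coeff_mk]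
  rcases lt_or_ge (k - d + d) 0 with hk | hk <;> rcases lt_or_ge (k - d) 0 with hk' | hk'
  · rw [if_pos hk, if_pos hk', mul_zero]
  · rw [if_pos hk, if_neg hk'.not_gt,
      elem_mul_eq_zero_of_mem_shiftOps hX (m := (k - d).natAbs) (by omega)]
    ring
  · rw [if_neg hk.not_gt, if_pos hk',
      elem_mul_eq_zero_of_mem_shiftOps hY (m := (k - d + d).natAbs) (by omega)]
    ring
  · rw [if_neg hk.not_gt, if_neg hk'.not_gt,
      elem_mul_comm_of_mem_shiftOps hX hY (m' := (k - d).natAbs) (by omega),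
      ← mul_assoc, ← zpow_add₀ q_ne_zero]
    congr 2
    push_cast [Int.natAbs_of_nonneg hk, Int.natAbs_of_nonneg hk']
    ring

/-- The factor `(q^{-l}t;q)_{l+1} ((q²;q²)_l (-qt;q)_l)⁻¹` of `K`, which depends only on `l`. -/
def Kprefactor (l : ℕ) : LS :=
  HahnSeries.ofPowerSeries ℤ Fq
    (poch (PowerSeries.C (q ^ (-(l : ℤ))) * PowerSeries.X) (PowerSeries.C q) (l + 1) *
      (PowerSeries.C (poch (q ^ 2) (q ^ 2) l) *
        poch (PowerSeries.C (-q) * PowerSeries.X) (PowerSeries.C q) l)⁻¹)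

lemma Kmat_eq_Kprefactor_mul (n l : ℕ) (α γ : Fin n → ℕ) :
    Kmat n l α γ = Kprefactor l * (HahnSeries.C (q ^ innN γ α) *
      diagSeries l (List.ofFn fun i => Gop (α i) (γ i)).prod) := by
  simp only [Kmat, KmatPS, Kprefactor, diagSeries, RingHom.id_apply, map_mul,
    HahnSeries.ofPowerSeries_C]
  ring

lemma cyc_castSucc {n : ℕ} {M : Type*} (a : Fin (n + 1) → M) (i : Fin n) :
    cyc a i.castSucc = a i.succ := by
  simp only [cyc]
  congr 1
  ext
  simp [Nat.mod_eq_of_lt (Nat.succ_lt_succ i.isLt)]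

lemma cyc_last {n : ℕ} {M : Type*} (a : Fin (n + 1) → M) : cyc a (Fin.last n) = a 0 := by
  simp only [cyc]
  congr 1
  ext
  simp

lemma list_prod_ofFn_cyc {n : ℕ} {M : Type*} [Monoid M] (f : Fin (n + 1) → M) :
    (List.ofFn (cyc f)).prod = (List.ofFn fun i => f i.succ).prod * f 0 := by
  rw [List.ofFn_succ', List.concat_eq_append, List.prod_append]
  simp [cyc_castSucc, cyc_last]

lemma innN_eq_mul_sum_add {n : ℕ} (a b : Fin (n + 1) → ℕ) :
    innN a b = a 0 * ∑ j : Fin n, b j.succ + innN (fun i => a i.succ) (fun j => b j.succ) := by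
  rw [innN, Fin.sum_univ_succ]
  congr 1
  · simp [Fin.sum_univ_succ, Finset.mul_sum, Fin.succ_pos]
  · refine Finset.sum_congr rfl fun i _ => ?_
    simp [Fin.sum_univ_succ, Fin.succ_lt_succ_iff]

lemma innN_eq_add_sum_mul {n : ℕ} (a b : Fin (n + 1) → ℕ) :
    innN a b = innN (fun i => a i.castSucc) (fun j => b j.castSucc) +
      (∑ i : Fin n, a i.castSucc) * b (Fin.last n) := by
  rw [innN, Fin.sum_univ_castSucc, innN, Finset.sum_mul]
  simp [Fin.sum_univ_castSucc, Finset.sum_add_distrib, Fin.castSucc_lt_last, (Fin.le_last _).not_gt]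

lemma innN_cyc {n : ℕ} (a b : Fin (n + 1) → ℕ) :
    innN (cyc a) (cyc b) + a 0 * ∑ i, b i = innN a b + b 0 * ∑ i, a i := by
  rw [innN_eq_add_sum_mul, innN_eq_mul_sum_add]
  simp only [cyc_castSucc, cyc_last, Fin.sum_univ_succ]
  ring

lemma C_mul_single_eq_single_mul_C {R : Type*} [CommRing R] (r s : R) (d : ℤ) :
    HahnSeries.C r * HahnSeries.single d s = HahnSeries.single d 1 * HahnSeries.C (r * s) := by
  simp only [HahnSeries.C_apply, HahnSeries.single_mul_single, zero_add, add_zero, one_mul]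

lemma T_inv_zpow (e : ℤ) : T⁻¹ ^ e = HahnSeries.single (-e) 1 := by
  rw [T, inv_zpow, ← RatFunc.single_zpow, HahnSeries.inv_single, inv_one]

/-- `K(z)^γ_α = z^{α₁-γ₁} K(z)^{σ(γ)}_{σ(α)}` where `z = t⁻¹` and `σ` is the
cyclic shift. -/
theorem statement4 (n l : ℕ) (hn : 2 ≤ n) (α γ : Fin n → ℕ)
    (hα : ∑ i, α i = l) (hγ : ∑ i, γ i = l) :
    Kmat n l α γ =
      T⁻¹ ^ ((α ⟨0, by omega⟩ : ℤ) - (γ ⟨0, by omega⟩ : ℤ)) * Kmat n l (cyc α) (cyc γ) := by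
  obtain ⟨n, rfl⟩ : ∃ k, n = k + 1 := ⟨n - 1, by omega⟩
  simp only [Fin.zero_eta]
  set d : ℤ := γ 0 - α 0
  set X := Gop (α 0) (γ 0)
  set Y := (List.ofFn fun i : Fin n => Gop (α i.succ) (γ i.succ)).prod
  have hX : X ∈ shiftOps d := Gop_natCast_mem_shiftOps _ _
  have hY : Y ∈ shiftOps (-d) := by
    convert list_prod_ofFn_Gop_mem_shiftOps (fun i => α i.succ) (fun i => γ i.succ) using 2
    rw [Fin.sum_univ_succ] at hα hγ
    omega
  have hq : q ^ innN γ α * q ^ (-(l * d)) = q ^ innN (cyc γ) (cyc α) := by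
    have hinn := innN_cyc γ α
    rw [hα, hγ] at hinn
    rw [← zpow_natCast, ← zpow_natCast, ← zpow_add₀ q_ne_zero]
    congr 1
    zify at hinn
    linear_combination -hinn
  have hprod_cyc : (List.ofFn fun i => Gop ((cyc α i : ℕ) : ℤ) (cyc γ i : ℕ)).prod = Y * X :=
    list_prod_ofFn_cyc fun i => Gop (α i) (γ i)
  rw [Kmat_eq_Kprefactor_mul, Kmat_eq_Kprefactor_mul, List.ofFn_succ, List.prod_cons,
    hprod_cyc, diagSeries_mul_comm hX hY, T_inv_zpow, neg_sub,
    ← mul_assoc (HahnSeries.C _), C_mul_single_eq_single_mul_C, hq]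
  ring

end KOY
end
end

section
/- Let n = 2, l ≥ 0, and let α = (α₁,α₂), γ = (γ₁,γ₂) ∈ B^{(2)}_l satisfy s := γ₁ − α₁ = α₂ − γ₂ ≥ 0. Then the following identity holds in F((t)): K^{(2,l)}(z)^γ_α = q^{α₁γ₂} t^{s} · (q^{−l}t;q)_{l+1} (q;q)_s (−q;q)_{α₁+γ₁} (−q;q)_{α₂+γ₂} · ((q²;q²)_l (−qt;q)_l)^{−1} · Σ_{j=0}^{α₁} Σ_{k=0}^{γ₂} q^{j+k} (q^{−2α₁};q²)_j (q^{−2γ₂};q²)_k · ((q^{j+k−l}t;q)_{s+1} (q;q)_j (q;q)_k (−q^{−α₁−γ₁};q)_j (−q^{−α₂−γ₂};q)_k)^{−1}, where each factor (q^{j+k−l}t;q)_{s+1} has constant term 1 and is therefore invertible in F[[t]]. (This is the explicit double-sum formula for all matrix elements of the K matrix of U_q(A^{(1)}_1).) -/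
open scoped Classical

noncomputable section

namespace KOY

/-!
Since `γ₁ = α₁ + s` and `α₂ = γ₂ + s`, the operator `G^{γ₁}_{α₁}` raises the occupation number by
`s` and `G^{γ₂}_{α₂}` lowers it by `s`, so their product is diagonal. Its eigenvalue on `|m⟩`
vanishes for `m < s` and, for `m = s + p`, equals
`(-q;q)_{α₁+γ₁} (-q;q)_{α₂+γ₂} (q^{p+1};q)_s P₁(q^p) P₂(q^p)`, where `P₁`, `P₂` are the
polynomials coming from the sums defining the two `G`'s. Expanding `P₁ P₂`, the generating
series becomes `t^s` times a finite double sum of series `∑ₚ (q^{j+k-l} t)^p (q^{p+1};q)_s`,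
each of which the `q`-binomial theorem sums to `(q;q)_s / (q^{j+k-l} t;q)_{s+1}`. Finally
`(q^{-a};q)_j (-q^{-a};q)_j = (q^{-2a};q²)_j`.
-/

section Poch

variable {R : Type*} [CommRing R]

lemma map_poch {S : Type*} [CommRing S] (f : R →+* S) (z a : R) (m : ℕ) :
    f (poch z a m) = poch (f z) (f a) m := by
  simp [poch, map_prod]

lemma poch_succ (z a : R) (m : ℕ) : poch z a (m + 1) = poch z a m * (1 - z * a ^ m) :=
  Finset.prod_range_succ _ _

lemma poch_succ' (z a : R) (m : ℕ) : poch z a (m + 1) = (1 - z) * poch (z * a) a m := by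
  simp only [poch, Finset.prod_range_succ', pow_zero, mul_one, pow_succ', mul_assoc]
  ring

lemma poch_mul_poch_neg (z a : R) (m : ℕ) :
    poch z a m * poch (-z) a m = poch (z ^ 2) (a ^ 2) m := by
  rw [poch, poch, poch, ← Finset.prod_mul_distrib]
  exact Finset.prod_congr rfl fun k _ => by ring

lemma prod_range_one_sub_pow_sub (a : R) (s p : ℕ) :
    ∏ r ∈ Finset.range s, (1 - a ^ (s + p - r)) = poch (a ^ (p + 1)) a s := by
  rw [poch, ← Finset.prod_range_reflect]
  refine Finset.prod_congr rfl fun r hr => ?_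
  rw [← pow_add]
  congr 2
  have := Finset.mem_range.1 hr
  omega

lemma poch_self_ne_zero {K : Type*} [Field K] {a : K} (ha : ∀ n ≠ 0, a ^ n ≠ 1) (m : ℕ) :
    poch a a m ≠ 0 :=
  Finset.prod_ne_zero_iff.2 fun k _ => by
    rw [← pow_succ', sub_ne_zero]
    exact (ha (k + 1) k.succ_ne_zero).symm

end Poch

lemma q_pow_ne_one {n : ℕ} (hn : n ≠ 0) : q ^ n ≠ 1 := by
  rw [q, ← RatFunc.algebraMap_X, ← map_pow, ← map_one (algebraMap (Polynomial ℚ) Fq),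
    (RatFunc.algebraMap_injective ℚ).ne_iff]
  intro h
  simpa [hn] using congrArg Polynomial.natDegree h

lemma poch_q_sq_ne_zero (m : ℕ) : poch (q ^ 2) (q ^ 2) m ≠ 0 :=
  poch_self_ne_zero (fun n hn => by rw [← pow_mul]; exact q_pow_ne_one (by omega)) m

section PowerSeries

open PowerSeries

lemma constantCoeff_poch_C_mul_X {R : Type*} [CommRing R] (x a : R) (m : ℕ) :
    constantCoeff (poch (C x * X) (C a) m) = 1 := by
  simp [poch, map_prod]

lemma mk_eq_X_pow_mul_mk {R : Type*} [Semiring R] {f : ℕ → R} {s : ℕ}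
    (hf : ∀ m < s, f m = 0) : mk f = X ^ s * mk fun p => f (s + p) := by
  ext m
  rw [coeff_X_pow_mul', coeff_mk]
  split_ifs with h
  · rw [coeff_mk, Nat.add_sub_cancel' h]
  · exact hf m (not_le.1 h)

lemma map_inv_of_constantCoeff_ne_zero {k L : Type*} [Field k] [DivisionRing L]
    (f : k⟦X⟧ →+* L) {φ : k⟦X⟧} (h : constantCoeff φ ≠ 0) : f φ⁻¹ = (f φ)⁻¹ := by
  refine (inv_eq_of_mul_eq_one_right ?_).symm
  rw [← map_mul, PowerSeries.mul_inv_cancel φ h, map_one]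

end PowerSeries

section QBinomial

open PowerSeries

variable {R : Type*} [CommRing R]

lemma coeff_one_sub_C_mul_X_mul_mk (x : R) (f : ℕ → R) (n : ℕ) :
    coeff n ((1 - C x * X) * mk f) = f n - x * if n = 0 then 0 else f (n - 1) := by
  rw [sub_mul, one_mul, map_sub, mul_assoc, coeff_C_mul]
  cases n with
  | zero => simp
  | succ n => simp [coeff_succ_X_mul]

lemma one_sub_C_mul_X_mul_mk_poch (x a : R) (s : ℕ) :
    (1 - C (x * a ^ (s + 1)) * X) * mk (fun p => x ^ p * poch (a ^ (p + 1)) a (s + 1)) =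
      C (1 - a ^ (s + 1)) * mk fun p => x ^ p * poch (a ^ (p + 1)) a s := by
  ext n
  rw [coeff_one_sub_C_mul_X_mul_mk, coeff_C_mul, coeff_mk]
  cases n with
  | zero => rw [if_pos rfl, mul_zero, sub_zero, poch_succ]; ring
  | succ p =>
    simp only [Nat.succ_ne_zero, if_false, Nat.add_sub_cancel, poch_succ (a ^ (p + 1 + 1)),
      poch_succ' (a ^ (p + 1)), ← pow_succ]
    ring

/-- The `q`-binomial theorem `∑ₚ (a^{p+1};a)ₛ (x t)^p = (a;a)ₛ / (x t;a)_{s+1}`, cleared of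
denominators. -/
lemma poch_C_mul_X_mul_mk (x a : R) (s : ℕ) :
    poch (C x * X) (C a) (s + 1) * mk (fun p => x ^ p * poch (a ^ (p + 1)) a s) =
      C (poch a a s) := by
  induction s with
  | zero =>
    ext n
    simp only [poch, zero_add, Finset.range_one, Finset.prod_singleton, Finset.range_zero,
      Finset.prod_empty, pow_zero, mul_one, map_one, coeff_one_sub_C_mul_X_mul_mk, coeff_one]
    cases n with
    | zero => simp
    | succ n => simp [pow_succ']
  | succ s ih =>
    have hfactor : poch (C x * X) (C a) (s + 1 + 1) =
        poch (C x * X) (C a) (s + 1) * (1 - C (x * a ^ (s + 1)) * X) := by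
      rw [poch_succ, map_mul, map_pow]; ring
    rw [hfactor, mul_assoc, one_sub_C_mul_X_mul_mk_poch, mul_left_comm, ih, ← map_mul,
      poch_succ a a s, mul_comm, ← pow_succ']

lemma mk_poch_eq {K : Type*} [Field K] (x a : K) (s : ℕ) :
    (mk fun p => x ^ p * poch (a ^ (p + 1)) a s) =
      C (poch a a s) * (poch (C x * X) (C a) (s + 1))⁻¹ := by
  rw [PowerSeries.eq_mul_inv_iff_mul_eq (by simp [constantCoeff_poch_C_mul_X]), mul_comm,
    poch_C_mul_X_mul_mk]

end QBinomial

section Fock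

open Finsupp

lemma lift_single_one (f : ℕ → Fock) (m : ℕ) : Finsupp.lift Fock Fq ℕ f (single m 1) = f m := by
  simp

lemma aP_pow_single (n m : ℕ) : (aP ^ n) (single m 1) = single (m + n) 1 := by
  induction n with
  | zero => simp
  | succ n ih => rw [pow_succ', Module.End.mul_apply, ih, aP, lift_single_one, add_assoc]

lemma aM_pow_single (n m : ℕ) :
    (aM ^ n) (single m 1) = (∏ r ∈ Finset.range n, (1 - q ^ (m - r))) • single (m - n) 1 := by
  induction n with
  | zero => simp
  | succ n ih =>
    rw [pow_succ', Module.End.mul_apply, ih, map_smul, aM, lift_single_one, smul_smul,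
      Finset.prod_range_succ, Nat.sub_sub]

lemma kO_pow_single (n m : ℕ) : (kO ^ n) (single m 1) = (q ^ m) ^ n • single m 1 := by
  induction n with
  | zero => simp
  | succ n ih => rw [pow_succ', Module.End.mul_apply, ih, map_smul, kO, lift_single_one,
      smul_smul, pow_succ]

end Fock

/-- The coefficient of `(a⁺)^{(j-i)₊} (q k)^n (a⁻)^{(i-j)₊}` in `G^j_i`, without the prefactor
`(-q;q)_{i+j}`. -/
def Gcoef (i j n : ℕ) : Fq :=
  poch (q ^ (-(min i j : ℤ))) q n * poch (-q ^ (-(min i j : ℤ))) q n /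
    (poch q q n * poch (-q ^ (-((i : ℤ) + j))) q n)

/-- On `|m⟩`, the sum over `n` in `G^j_i` evaluates this polynomial at `x = q^{m - (i-j)₊}`. -/
def Gpoly (i j : ℕ) (x : Fq) : Fq :=
  ∑ n ∈ Finset.range (min i j + 1), Gcoef i j n * (q * x) ^ n

lemma Gcoef_eq (i j n : ℕ) :
    Gcoef i j n = poch (q ^ (-(2 * min (i : ℤ) j))) (q ^ 2) n /
      (poch q q n * poch (-q ^ (-(i : ℤ) - j)) q n) := by
  rw [Gcoef, poch_mul_poch_neg, ← zpow_natCast, ← zpow_mul, neg_sub_left]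
  push_cast
  ring_nf

lemma GopN_single (i j m : ℕ) :
    GopN i j (Finsupp.single m 1) =
      (poch (-q) q (i + j) * (∏ r ∈ Finset.range (i - j), (1 - q ^ (m - r))) *
          Gpoly i j (q ^ (m - (i - j)))) •
        Finsupp.single (m - (i - j) + (j - i)) 1 := by
  simp only [GopN, Gpoly, Gcoef, LinearMap.smul_apply, LinearMap.sum_apply, Module.End.mul_apply,
    aM_pow_single, map_smul, kO_pow_single, aP_pow_single, smul_smul]
  rw [← Finset.sum_smul, smul_smul, Finset.mul_sum, Finset.mul_sum]
  congr 1
  refine Finset.sum_congr rfl fun n _ => ?_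
  ring

lemma elem_GopN_mul_GopN {i₁ j₁ i₂ j₂ s : ℕ} (hs₁ : j₁ = i₁ + s) (hs₂ : i₂ = j₂ + s) (m : ℕ) :
    elem (GopN i₁ j₁ * GopN i₂ j₂) m =
      poch (-q) q (i₁ + j₁) * poch (-q) q (i₂ + j₂) * (∏ r ∈ Finset.range s, (1 - q ^ (m - r))) *
        Gpoly i₁ j₁ (q ^ (m - s)) * Gpoly i₂ j₂ (q ^ (m - s)) := by
  subst hs₁ hs₂
  rw [elem, Module.End.mul_apply, GopN_single, map_smul, GopN_single]
  simp only [Nat.add_sub_cancel_left, Nat.sub_self_add, Finset.range_zero, Finset.prod_empty,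
    Nat.sub_zero, add_zero, mul_one, smul_smul, Finsupp.smul_apply, smul_eq_mul,
    Finsupp.single_apply]
  by_cases h : s ≤ m
  · rw [if_pos (Nat.sub_add_cancel h)]
    ring
  · rw [Finset.prod_eq_zero (Finset.mem_range.2 (not_le.1 h)) (by simp)]
    simp

lemma zpow_neg_mul_add_mul_pow {K : Type*} [Field K] {x : K} (hx : x ≠ 0) (l s p j k : ℕ) :
    x ^ (-(l * (s + p : ℕ) : ℤ)) * (x * x ^ p) ^ j * (x * x ^ p) ^ k =
      x ^ (-(l * s : ℤ)) * x ^ (j + k) * (x ^ ((j : ℤ) + k - l)) ^ p := by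
  simp only [← pow_succ']
  simp only [← zpow_natCast, ← zpow_mul, ← zpow_add₀ hx]
  congr 1
  push_cast
  ring

section GeneratingSeries

open PowerSeries

lemma mk_elem_GopN_mul_GopN (l : ℕ) {i₁ j₁ i₂ j₂ s : ℕ} (hs₁ : j₁ = i₁ + s) (hs₂ : i₂ = j₂ + s) :
    (mk fun m => q ^ (-(l * m : ℤ)) * elem (GopN i₁ j₁ * GopN i₂ j₂) m) =
      C (q ^ (-(l * s : ℤ)) * poch (-q) q (i₁ + j₁) * poch (-q) q (i₂ + j₂)) * X ^ s *
        ∑ j ∈ Finset.range (min i₁ j₁ + 1), ∑ k ∈ Finset.range (min i₂ j₂ + 1),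
          C (Gcoef i₁ j₁ j * Gcoef i₂ j₂ k * q ^ (j + k)) *
            mk fun p => (q ^ ((j : ℤ) + k - l)) ^ p * poch (q ^ (p + 1)) q s := by
  have hvanish : ∀ m < s, q ^ (-(l * m : ℤ)) * elem (GopN i₁ j₁ * GopN i₂ j₂) m = 0 := by
    intro m hm
    rw [elem_GopN_mul_GopN hs₁ hs₂, Finset.prod_eq_zero (Finset.mem_range.2 hm) (by simp)]
    simp
  rw [mk_eq_X_pow_mul_mk hvanish, mul_comm (C _), mul_assoc]
  congr 1
  ext p
  simp only [coeff_mk, coeff_C_mul, map_sum, elem_GopN_mul_GopN hs₁ hs₂, Nat.add_sub_cancel_left,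
    prod_range_one_sub_pow_sub, Gpoly, Finset.sum_mul, Finset.mul_sum]
  rw [Finset.sum_comm]
  refine Finset.sum_congr rfl fun j _ => Finset.sum_congr rfl fun k _ => ?_
  linear_combination poch (-q) q (i₁ + j₁) * poch (-q) q (i₂ + j₂) * poch (q ^ (p + 1)) q s *
    Gcoef i₁ j₁ j * Gcoef i₂ j₂ k * zpow_neg_mul_add_mul_pow q_ne_zero l s p j k

end GeneratingSeries

section LaurentSeries

open PowerSeries HahnSeries

lemma ofPowerSeries_C_eq_CL (x : Fq) : ofPowerSeries ℤ Fq (C x) = CL x :=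
  ofPowerSeries_C x

lemma ofPowerSeries_X_eq_T : ofPowerSeries ℤ Fq X = T :=
  ofPowerSeries_X

lemma ofPowerSeries_poch (x a : Fq) (m : ℕ) :
    ofPowerSeries ℤ Fq (poch (C x * X) (C a) m) = poch (CL x * T) (CL a) m := by
  rw [map_poch, map_mul, ofPowerSeries_C_eq_CL, ofPowerSeries_C_eq_CL, ofPowerSeries_X_eq_T]

lemma ofPowerSeries_inv_poch (x a : Fq) (m : ℕ) :
    ofPowerSeries ℤ Fq (poch (C x * X) (C a) m)⁻¹ = (poch (CL x * T) (CL a) m)⁻¹ := by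
  rw [map_inv_of_constantCoeff_ne_zero _ (by simp [constantCoeff_poch_C_mul_X]),
    ofPowerSeries_poch]

lemma ofPowerSeries_mk_elem_GopN_mul_GopN (l : ℕ) {i₁ j₁ i₂ j₂ s : ℕ} (hs₁ : j₁ = i₁ + s)
    (hs₂ : i₂ = j₂ + s) :
    ofPowerSeries ℤ Fq (mk fun m => q ^ (-(l * m : ℤ)) * elem (GopN i₁ j₁ * GopN i₂ j₂) m) =
      CL (q ^ (-(l * s : ℤ))) * T ^ s *
        CL (poch q q s * poch (-q) q (i₁ + j₁) * poch (-q) q (i₂ + j₂)) *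
        ∑ j ∈ Finset.range (min i₁ j₁ + 1), ∑ k ∈ Finset.range (min i₂ j₂ + 1),
          CL (q ^ (j + k) * poch (q ^ (-(2 * min (i₁ : ℤ) j₁))) (q ^ 2) j *
              poch (q ^ (-(2 * min (i₂ : ℤ) j₂))) (q ^ 2) k) *
            (poch (CL (q ^ ((j : ℤ) + k - l)) * T) (CL q) (s + 1) *
              CL (poch q q j * poch q q k * poch (-q ^ (-(i₁ : ℤ) - j₁)) q j *
                poch (-q ^ (-(i₂ : ℤ) - j₂)) q k))⁻¹ := by
  simp only [mk_elem_GopN_mul_GopN l hs₁ hs₂, mk_poch_eq, map_mul, map_sum, map_pow,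
    ofPowerSeries_C_eq_CL, ofPowerSeries_X_eq_T, ofPowerSeries_inv_poch, Gcoef_eq, map_div₀,
    Finset.mul_sum]
  refine Finset.sum_congr rfl fun j _ => Finset.sum_congr rfl fun k _ => ?_
  ring

end LaurentSeries

lemma Gop_natCast (i j : ℕ) : Gop i j = GopN i j := by
  simp [Gop]

open PowerSeries HahnSeries in
lemma Kmat_two (l α₁ α₂ γ₁ γ₂ : ℕ) :
    Kmat 2 l ![α₁, α₂] ![γ₁, γ₂] =
      CL (q ^ (γ₁ * α₂)) * poch (CL (q ^ (-(l : ℤ))) * T) (CL q) (l + 1) *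
        (CL (poch (q ^ 2) (q ^ 2) l) * poch (-CL q * T) (CL q) l)⁻¹ *
        ofPowerSeries ℤ Fq (mk fun m => q ^ (-(l * m : ℤ)) * elem (GopN α₁ γ₁ * GopN α₂ γ₂) m) := by
  have hinn : innN ![γ₁, γ₂] ![α₁, α₂] = γ₁ * α₂ := by simp [innN, Fin.sum_univ_two]
  have hunit : constantCoeff (C (poch (q ^ 2) (q ^ 2) l) * poch (C (-q) * X) (C q) l) ≠ 0 := by
    rw [map_mul, constantCoeff_C, constantCoeff_poch_C_mul_X, mul_one]
    exact poch_q_sq_ne_zero l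
  simp only [Kmat, KmatPS, RingHom.id_apply, List.ofFn_succ, List.ofFn_zero, List.prod_cons,
    List.prod_nil, mul_one, Matrix.cons_val_zero, Matrix.cons_val_succ, Gop_natCast, hinn]
  rw [map_mul, map_mul, map_mul, map_inv_of_constantCoeff_ne_zero _ hunit]
  simp only [map_mul, ofPowerSeries_poch, ofPowerSeries_C_eq_CL]
  rw [map_neg]

theorem statement8_general (l α₁ α₂ γ₁ γ₂ s : ℕ) (hα : α₁ + α₂ = l)
    (hs1 : γ₁ = α₁ + s) (hs2 : α₂ = γ₂ + s) :
    Kmat 2 l ![α₁, α₂] ![γ₁, γ₂] =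
      CL (q ^ (α₁ * γ₂)) * T ^ s *
        poch (CL (q ^ (-(l : ℤ))) * T) (CL q) (l + 1) *
        CL (poch q q s * poch (-q) q (α₁ + γ₁) * poch (-q) q (α₂ + γ₂)) *
        (CL (poch (q ^ 2) (q ^ 2) l) * poch (-CL q * T) (CL q) l)⁻¹ *
        ∑ j ∈ Finset.range (α₁ + 1), ∑ k ∈ Finset.range (γ₂ + 1),
          CL (q ^ (j + k) * poch (q ^ (-(2 * α₁ : ℤ))) (q ^ 2) j *
              poch (q ^ (-(2 * γ₂ : ℤ))) (q ^ 2) k) *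
            (poch (CL (q ^ ((j : ℤ) + k - l)) * T) (CL q) (s + 1) *
                CL (poch q q j * poch q q k * poch (-q ^ (-(α₁ : ℤ) - γ₁)) q j *
                    poch (-q ^ (-(α₂ : ℤ) - γ₂)) q k))⁻¹ := by
  have hmin₁ : min α₁ γ₁ = α₁ := by omega
  have hmin₂ : min α₂ γ₂ = γ₂ := by omega
  have hmin₁' : min (α₁ : ℤ) γ₁ = α₁ := by omega
  have hmin₂' : min (α₂ : ℤ) γ₂ = γ₂ := by omega
  have hexp : q ^ (γ₁ * α₂) * q ^ (-(l * s : ℤ)) = q ^ (α₁ * γ₂) := by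
    rw [← zpow_natCast, ← zpow_natCast, ← zpow_add₀ q_ne_zero]
    subst hα hs1 hs2
    push_cast
    ring_nf
  rw [Kmat_two, ofPowerSeries_mk_elem_GopN_mul_GopN l hs1 hs2, hmin₁, hmin₂, hmin₁', hmin₂', ← hexp,
    map_mul CL (q ^ (γ₁ * α₂))]
  ring

/-- the explicit double-sum formula for all matrix elements of the `K` matrix
of `U_q(A^{(1)}_1)` (the case `n = 2`), assuming `s = γ₁ - α₁ = α₂ - γ₂ ≥ 0`. -/
theorem statement8 (l α₁ α₂ γ₁ γ₂ s : ℕ) (hα : α₁ + α₂ = l) (hγ : γ₁ + γ₂ = l)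
    (hs1 : γ₁ = α₁ + s) (hs2 : α₂ = γ₂ + s) :
    Kmat 2 l ![α₁, α₂] ![γ₁, γ₂] =
      CL (q ^ (α₁ * γ₂)) * T ^ s *
        poch (CL (q ^ (-(l : ℤ))) * T) (CL q) (l + 1) *
        CL (poch q q s * poch (-q) q (α₁ + γ₁) * poch (-q) q (α₂ + γ₂)) *
        (CL (poch (q ^ 2) (q ^ 2) l) * poch (-CL q * T) (CL q) l)⁻¹ *
        ∑ j ∈ Finset.range (α₁ + 1), ∑ k ∈ Finset.range (γ₂ + 1),
          CL (q ^ (j + k) * poch (q ^ (-(2 * α₁ : ℤ))) (q ^ 2) j *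
              poch (q ^ (-(2 * γ₂ : ℤ))) (q ^ 2) k) *
            (poch (CL (q ^ ((j : ℤ) + k - l)) * T) (CL q) (s + 1) *
                CL (poch q q j * poch q q k * poch (-q ^ (-(α₁ : ℤ) - γ₁)) q j *
                    poch (-q ^ (-(α₂ : ℤ) - γ₂)) q k))⁻¹ :=
  statement8_general l α₁ α₂ γ₁ γ₂ s hα hs1 hs2

end KOY
end
end
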